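/- For every measurable g : [0,∞) → [0,∞], ∫_{y ∈ ℝ²} g(|y|) ( ∫_{a ∈ H⁺(0,y)} ∫_{b ∈ ℝ² : [a,b] ∩ [0,y] ≠ ∅} g(|a−b|) db da ) dy = 4π ( ∫_0^∞ r² g(r) dr )², where for y ≠ 0 the middle integral is over the open half-plane H⁺(0,y) and the innermost over all b such that the segment [a,b] meets the segment from the origin to y (all integrals with respect to Lebesgue measure). -/

import Mathlib

open MeasureTheory Set Real
open scoped ENNReal

/-- The open half-plane to the left of the directed line from `a` to `b`. -/
def Hplus (a b : EuclideanSpace ℝ (Fin 2)) : Set (EuclideanSpace ℝ (Fin 2)) :=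
  {c | 0 < (b 0 - a 0) * (c 1 - a 1) - (b 1 - a 1) * (c 0 - a 0)}

/-!
Fix `y` and a point `a` strictly to the left of `y`. The points `b` for which `[a, b]` meets
`[0, y]` are exactly `b = a + l • (s • y - a)` with `s ∈ [0, 1]` and `l ≥ 1`, and this
parametrization has Jacobian `l · (y × a)`. Exchanging the `a`- and `(s, l)`-integrals and
translating `a` by `s • y`, the `a`-integral becomes `∫ (l · y × a)₊ g(l |a|) da`, which by
scaling and polar coordinates (`∫ sin₊ = 2` over a period) is `2 |y| l⁻² ∫₀^∞ r² g(r) dr`.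
Since `∫_{[0,1] × [1,∞)} l⁻² = 1`, the inner double integral is `2 |y| ∫₀^∞ r² g(r) dr`, and
integrating `g(|y|) · 2 |y|` in polar coordinates produces the factor `4π`.
-/

theorem lintegral_comp_smul_addHaar {E : Type*} [NormedAddCommGroup E] [NormedSpace ℝ E]
    [MeasurableSpace E] [BorelSpace E] [FiniteDimensional ℝ E] (μ : Measure E)
    [μ.IsAddHaarMeasure] (f : E → ℝ≥0∞) {r : ℝ} (hr : r ≠ 0) :
    ∫⁻ x, f (r • x) ∂μ = ENNReal.ofReal |(r ^ Module.finrank ℝ E)⁻¹| * ∫⁻ x, f x ∂μ := by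
  rw [← smul_eq_mul, ← lintegral_smul_measure, ← Measure.map_addHaar_smul μ hr]
  exact (lintegral_map_equiv f
    (Homeomorph.smul (isUnit_iff_ne_zero.2 hr).unit).toMeasurableEquiv).symm

namespace PlaneCrossing

noncomputable def planeNorm (p : ℝ × ℝ) : ℝ := √(p.1 ^ 2 + p.2 ^ 2)

def cross (w c : ℝ × ℝ) : ℝ := w.1 * c.2 - w.2 * c.1

theorem planeNorm_smul (t : ℝ) (p : ℝ × ℝ) : planeNorm (t • p) = |t| * planeNorm p := by
  simp only [planeNorm, Prod.smul_fst, Prod.smul_snd, smul_eq_mul, mul_pow]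
  rw [← mul_add, Real.sqrt_mul (sq_nonneg t), Real.sqrt_sq_eq_abs]

theorem planeNorm_neg (p : ℝ × ℝ) : planeNorm (-p) = planeNorm p := by simp [planeNorm]

theorem planeNorm_polar (r θ : ℝ) : planeNorm (r * cos θ, r * sin θ) = |r| := by
  rw [planeNorm, mul_pow, mul_pow, ← mul_add, cos_sq_add_sin_sq, mul_one, Real.sqrt_sq_eq_abs]

@[fun_prop]
theorem continuous_planeNorm : Continuous planeNorm := by
  unfold planeNorm; fun_prop

@[fun_prop]
theorem continuous_cross (w : ℝ × ℝ) : Continuous (cross w) := by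
  unfold cross; fun_prop

theorem cross_add_smul_self (w a : ℝ × ℝ) (s : ℝ) : cross w (a + s • w) = cross w a := by
  simp only [cross, Prod.fst_add, Prod.snd_add, Prod.smul_fst, Prod.smul_snd, smul_eq_mul]; ring

theorem cross_smul (w a : ℝ × ℝ) (t : ℝ) : cross w (t • a) = t * cross w a := by
  simp only [cross, Prod.smul_fst, Prod.smul_snd, smul_eq_mul]; ring

theorem exists_eq_polar (w : ℝ × ℝ) :
    ∃ φ, w = (planeNorm w * cos φ, planeNorm w * sin φ) := by
  have hnorm : ‖(⟨w.1, w.2⟩ : ℂ)‖ = planeNorm w := by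
    rw [Complex.norm_def, Complex.normSq_apply, planeNorm]; ring_nf
  refine ⟨Complex.arg ⟨w.1, w.2⟩, ?_⟩
  rw [← hnorm, Complex.norm_mul_cos_arg, Complex.norm_mul_sin_arg]

theorem cross_polar (r φ ρ θ : ℝ) :
    cross (r * cos φ, r * sin φ) (ρ * cos θ, ρ * sin θ) = r * ρ * sin (θ - φ) := by
  rw [cross, sin_sub]; ring

theorem integral_posPart_sin_sub (φ : ℝ) :
    ∫ θ in (-π)..π, max (sin (θ - φ)) 0 = 2 := by
  have hper : Function.Periodic (fun x => max (sin x) 0) (2 * π) :=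
    fun x => by simp only [sin_periodic x]
  have hcont : Continuous fun x => max (sin x) 0 := by fun_prop
  have hupper : ∫ x in (0 : ℝ)..π, max (sin x) 0 = 2 := by
    rw [intervalIntegral.integral_congr (g := sin), integral_sin, cos_zero, cos_pi]
    · norm_num
    · intro x hx
      rw [uIcc_of_le pi_pos.le] at hx
      exact max_eq_left (sin_nonneg_of_nonneg_of_le_pi hx.1 hx.2)
  have hlower : ∫ x in (-π)..0, max (sin x) 0 = 0 := by
    rw [intervalIntegral.integral_congr (g := fun _ => 0), intervalIntegral.integral_zero]
    intro x hx
    rw [uIcc_of_le (by linarith [pi_pos])] at hx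
    exact max_eq_right (sin_nonpos_of_nonpos_of_neg_pi_le hx.2 hx.1)
  calc ∫ θ in (-π)..π, max (sin (θ - φ)) 0
      = ∫ x in (-π - φ)..(-π - φ) + 2 * π, max (sin x) 0 := by
        rw [intervalIntegral.integral_comp_sub_right (fun x => max (sin x) 0)]; ring_nf
    _ = ∫ x in (-π)..(-π) + 2 * π, max (sin x) 0 := hper.intervalIntegral_add_eq _ _
    _ = 2 := by
        rw [show -π + 2 * π = π by ring, ← intervalIntegral.integral_add_adjacent_intervals
          (hcont.intervalIntegrable (-π) 0) (hcont.intervalIntegrable 0 π), hupper, hlower,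
          zero_add]

theorem lintegral_ofReal_sin_sub (φ : ℝ) :
    ∫⁻ θ in Ioo (-π) π, ENNReal.ofReal (sin (θ - φ)) = 2 := by
  have hcont : Continuous fun θ => max (sin (θ - φ)) 0 := by fun_prop
  have hmax (θ : ℝ) : ENNReal.ofReal (sin (θ - φ)) = ENNReal.ofReal (max (sin (θ - φ)) 0) := by
    simp
  simp_rw [hmax]
  rw [← ofReal_integral_eq_lintegral_ofReal (hcont.integrableOn_Icc.mono_set Ioo_subset_Icc_self)
    (ae_of_all _ fun _ => le_max_right _ _), integral_Ioc_eq_integral_Ioo.symm,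
    ← intervalIntegral.integral_of_le (by linarith [pi_pos]), integral_posPart_sin_sub,
    ENNReal.ofReal_ofNat]

theorem lintegral_eq_lintegral_polar {F : ℝ × ℝ → ℝ≥0∞} (hF : Measurable F) :
    ∫⁻ p, F p = ∫⁻ ρ in Ioi 0, ∫⁻ θ in Ioo (-π) π, ENNReal.ofReal ρ * F (ρ * cos θ, ρ * sin θ) := by
  rw [← lintegral_comp_polarCoord_symm, polarCoord_target, Measure.volume_eq_prod,
    ← Measure.prod_restrict, lintegral_prod]
  · simp only [polarCoord_symm_apply, smul_eq_mul]
  · refine Measurable.aemeasurable ?_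
    exact (ENNReal.measurable_ofReal.comp measurable_fst).mul (hF.comp (by fun_prop))

theorem lintegral_comp_planeNorm {f : ℝ → ℝ≥0∞} (hf : Measurable f) :
    ∫⁻ p, f (planeNorm p) = ENNReal.ofReal (2 * π) * ∫⁻ ρ in Ioi 0, ENNReal.ofReal ρ * f ρ := by
  rw [lintegral_eq_lintegral_polar (F := fun p => f (planeNorm p)) (by fun_prop),
    ← lintegral_const_mul _ (by fun_prop)]
  refine setLIntegral_congr_fun measurableSet_Ioi fun ρ (hρ : 0 < ρ) => ?_
  simp only [planeNorm_polar, abs_of_pos hρ, setLIntegral_const, Real.volume_Ioo]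
  rw [mul_comm, sub_neg_eq_add, ← two_mul]

theorem lintegral_ofReal_cross_mul_comp_planeNorm (w : ℝ × ℝ) {f : ℝ → ℝ≥0∞}
    (hf : Measurable f) :
    ∫⁻ a, ENNReal.ofReal (cross w a) * f (planeNorm a)
      = 2 * ENNReal.ofReal (planeNorm w) * ∫⁻ ρ in Ioi 0, ENNReal.ofReal (ρ ^ 2) * f ρ := by
  obtain ⟨φ, hφ⟩ := exists_eq_polar w
  set r := planeNorm w
  rw [lintegral_eq_lintegral_polar (by fun_prop), ← lintegral_const_mul _ (by fun_prop)]
  refine setLIntegral_congr_fun measurableSet_Ioi fun ρ (hρ : 0 < ρ) => ?_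
  have hr : 0 ≤ r := Real.sqrt_nonneg _
  have hpt (θ : ℝ) : ENNReal.ofReal ρ * (ENNReal.ofReal (cross w (ρ * cos θ, ρ * sin θ))
      * f (planeNorm (ρ * cos θ, ρ * sin θ)))
      = ENNReal.ofReal r * (ENNReal.ofReal (ρ ^ 2) * f ρ) * ENNReal.ofReal (sin (θ - φ)) := by
    rw [hφ, cross_polar, planeNorm_polar, abs_of_pos hρ, ENNReal.ofReal_mul (by positivity),
      ENNReal.ofReal_mul hr, pow_two, ENNReal.ofReal_mul hρ.le]
    ring
  simp_rw [hpt]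
  rw [lintegral_const_mul _ (by fun_prop), lintegral_ofReal_sin_sub]
  ring

section Crossing

variable {V : Type*} [AddCommGroup V] [Module ℝ V]

def crossingSet (a y : V) : Set V := {b | (segment ℝ a b ∩ segment ℝ 0 y).Nonempty}

def crossingMap (w α : V) (q : ℝ × ℝ) : V := α + q.2 • (q.1 • w - α)

theorem preimage_crossingSet {W F : Type*} [AddCommGroup W] [Module ℝ W] [FunLike F V W]
    [LinearMapClass F ℝ V W] {f : F} (hf : Function.Injective f) (a y : V) :
    f ⁻¹' crossingSet (f a) (f y) = crossingSet a y := by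
  ext b
  have hseg (u v : V) : segment ℝ (f u) (f v) = f '' segment ℝ u v :=
    (image_segment ℝ (f : V →ₗ[ℝ] W).toAffineMap u v).symm
  simp only [crossingSet, mem_preimage, mem_ofPred_eq]
  rw [← map_zero f, hseg, hseg, ← image_inter hf, image_nonempty]

theorem crossingSet_eq_image {α w : V} (hα : α ∉ segment ℝ 0 w) :
    crossingSet α w = crossingMap w α '' (Icc 0 1 ×ˢ Ici 1) := by
  ext β
  simp only [crossingSet, crossingMap, mem_ofPred_eq, mem_image, Prod.exists, mem_prod]
  constructor
  · rintro ⟨x, hxαβ, hx0w⟩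
    rw [segment_eq_image'] at hxαβ hx0w
    obtain ⟨t, ht, rfl⟩ := hxαβ
    obtain ⟨s, hs, hxs⟩ := hx0w
    simp only [zero_add, sub_zero] at hxs
    have ht0 : 0 < t := by
      refine ht.1.lt_of_ne' fun ht0 => hα ?_
      rw [segment_eq_image']
      exact ⟨s, hs, by simpa [ht0] using hxs⟩
    refine ⟨s, t⁻¹, ⟨hs, (one_le_inv₀ ht0).2 ht.2⟩, ?_⟩
    rw [hxs, add_sub_cancel_left, smul_smul, inv_mul_cancel₀ ht0.ne', one_smul,
      add_sub_cancel]
  · rintro ⟨s, l, ⟨hs, hl⟩, rfl⟩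
    have hl0 : 0 < l := zero_lt_one.trans_le hl
    refine ⟨s • w, ?_, ?_⟩
    · rw [segment_eq_image']
      refine ⟨l⁻¹, ⟨inv_nonneg.2 hl0.le, inv_le_one_of_one_le₀ hl⟩, ?_⟩
      dsimp only
      rw [add_sub_cancel_left, smul_smul, inv_mul_cancel₀ hl0.ne', one_smul, add_sub_cancel]
    · rw [segment_eq_image']
      exact ⟨s, hs, by simp⟩

end Crossing

noncomputable def crossingMapDeriv (w α q : ℝ × ℝ) : ℝ × ℝ →L[ℝ] ℝ × ℝ :=
  LinearMap.toContinuousLinearMap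
    (Matrix.toLin (Module.Basis.finTwoProd ℝ) (Module.Basis.finTwoProd ℝ)
      !![q.2 * w.1, q.1 * w.1 - α.1; q.2 * w.2, q.1 * w.2 - α.2])

theorem hasFDerivAt_crossingMap (w α q : ℝ × ℝ) :
    HasFDerivAt (crossingMap w α) (crossingMapDeriv w α q) q := by
  have h := ((hasFDerivAt_snd (𝕜 := ℝ) (p := q)).smul
    (((hasFDerivAt_fst (𝕜 := ℝ) (p := q)).smul_const w).sub_const α)).const_add α
  refine h.congr_fderiv (ContinuousLinearMap.ext fun p => ?_)
  rw [crossingMapDeriv, Matrix.toLin_finTwoProd_toContinuousLinearMap]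
  apply Prod.ext <;> simp [Prod.smul_def] <;> ring

theorem det_crossingMapDeriv (w α q : ℝ × ℝ) :
    (crossingMapDeriv w α q).det = -(q.2 * cross w α) := by
  simp only [crossingMapDeriv, LinearMap.det_toContinuousLinearMap, LinearMap.det_toLin,
    Matrix.det_fin_two_of, cross]
  ring

theorem cross_crossingMap (w α q : ℝ × ℝ) :
    cross w (crossingMap w α q) = (1 - q.2) * cross w α := by
  simp only [crossingMap, cross, Prod.fst_add, Prod.snd_add, Prod.smul_fst, Prod.smul_snd,
    Prod.fst_sub, Prod.snd_sub, smul_eq_mul]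
  ring

theorem injOn_crossingMap {w α : ℝ × ℝ} (hw : w ≠ 0) (hα : cross w α ≠ 0) :
    InjOn (crossingMap w α) {q | q.2 ≠ 0} := by
  rintro ⟨s, l⟩ (hl : l ≠ 0) ⟨s', l'⟩ - h
  obtain rfl : l = l' := by
    have := congrArg (cross w) h
    rw [cross_crossingMap, cross_crossingMap] at this
    linarith [mul_right_cancel₀ hα this]
  have hs : s • w = s' • w := by
    simpa [crossingMap] using smul_right_injective (ℝ × ℝ) hl (add_left_cancel h)
  rw [smul_left_injective ℝ hw hs]

theorem notMem_segment_of_cross_ne_zero {w α : ℝ × ℝ} (hα : cross w α ≠ 0) :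
    α ∉ segment ℝ 0 w := by
  rw [segment_eq_image']
  rintro ⟨s, -, rfl⟩
  simp only [zero_add, sub_zero, cross_smul] at hα
  exact hα (by rw [cross]; ring)

theorem lintegral_crossingSet {w α : ℝ × ℝ} (hw : w ≠ 0) (hα : 0 < cross w α)
    (G : ℝ × ℝ → ℝ≥0∞) :
    ∫⁻ β in crossingSet α w, G β
      = ∫⁻ q in Icc 0 1 ×ˢ Ici 1, ENNReal.ofReal (q.2 * cross w α) * G (crossingMap w α q) := by
  have hP : MeasurableSet (Icc (0 : ℝ) 1 ×ˢ Ici (1 : ℝ)) :=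
    measurableSet_Icc.prod measurableSet_Ici
  rw [crossingSet_eq_image (notMem_segment_of_cross_ne_zero hα.ne'),
    lintegral_image_eq_lintegral_abs_det_fderiv_mul volume hP
      (fun q _ => (hasFDerivAt_crossingMap w α q).hasFDerivWithinAt)
      ((injOn_crossingMap hw hα.ne').mono fun q hq => (zero_lt_one.trans_le hq.2).ne')]
  refine setLIntegral_congr_fun hP fun q hq => ?_
  rw [det_crossingMapDeriv, abs_neg, abs_of_pos (mul_pos (zero_lt_one.trans_le hq.2) hα)]

theorem lintegral_Ici_one_inv_sq : ∫⁻ l in Ici (1 : ℝ), ENNReal.ofReal (l ^ 2)⁻¹ = 1 := by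
  have hrpow : ∀ l ∈ Ioi (1 : ℝ), ENNReal.ofReal (l ^ 2)⁻¹ = ENNReal.ofReal (l ^ (-2 : ℝ)) := by
    intro l (hl : 1 < l)
    rw [rpow_neg (by linarith), ← rpow_natCast]
    norm_num
  rw [← setLIntegral_congr Ioi_ae_eq_Ici, setLIntegral_congr_fun measurableSet_Ioi hrpow,
    ← ofReal_integral_eq_lintegral_ofReal (integrableOn_Ioi_rpow_of_lt (by norm_num) one_pos)
      ((ae_restrict_iff' measurableSet_Ioi).2 (ae_of_all _ fun l (hl : 1 < l) =>
        rpow_nonneg (by linarith) _)),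
    integral_Ioi_rpow_of_lt (by norm_num) one_pos]
  norm_num

theorem lintegral_Icc_prod_Ici_inv_sq :
    ∫⁻ q in Icc (0 : ℝ) 1 ×ˢ Ici 1, ENNReal.ofReal (q.2 ^ 2)⁻¹ = 1 := by
  rw [Measure.volume_eq_prod, ← Measure.prod_restrict, lintegral_prod _ (by fun_prop)]
  simp [lintegral_Ici_one_inv_sq]

theorem lintegral_crossingSet_comp_planeNorm_sub {w α : ℝ × ℝ} (hw : w ≠ 0)
    (hα : 0 < cross w α) (g : ℝ → ℝ≥0∞) :
    ∫⁻ β in crossingSet α w, g (planeNorm (α - β))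
      = ∫⁻ q in Icc (0 : ℝ) 1 ×ˢ Ici 1,
          ENNReal.ofReal (q.2 * cross w α) * g (q.2 * planeNorm (q.1 • w - α)) := by
  rw [lintegral_crossingSet hw hα]
  refine setLIntegral_congr_fun (measurableSet_Icc.prod measurableSet_Ici) fun q hq => ?_
  have hsub : α - crossingMap w α q = -(q.2 • (q.1 • w - α)) := by
    rw [crossingMap]; abel
  rw [hsub, planeNorm_neg, planeNorm_smul, abs_of_pos (zero_lt_one.trans_le hq.2)]

theorem lintegral_ofReal_mul_cross_mul_comp_sub (w : ℝ × ℝ) {g : ℝ → ℝ≥0∞} (hg : Measurable g)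
    (s : ℝ) {l : ℝ} (hl : 0 < l) :
    ∫⁻ α, ENNReal.ofReal (l * cross w α) * g (l * planeNorm (s • w - α))
      = ENNReal.ofReal (l ^ 2)⁻¹ *
          (2 * ENNReal.ofReal (planeNorm w) * ∫⁻ ρ in Ioi 0, ENNReal.ofReal (ρ ^ 2) * g ρ) := by
  have hpt (α : ℝ × ℝ) :
      ENNReal.ofReal (l * cross w (α + s • w)) * g (l * planeNorm (s • w - (α + s • w)))
        = ENNReal.ofReal (cross w (l • α)) * g (planeNorm (l • α)) := by
    rw [cross_add_smul_self, cross_smul, planeNorm_smul, abs_of_pos hl, sub_add_cancel_right,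
      planeNorm_neg]
  rw [← lintegral_add_right_eq_self _ (s • w)]
  simp_rw [hpt]
  rw [lintegral_comp_smul_addHaar volume (fun a => ENNReal.ofReal (cross w a) * g (planeNorm a))
    hl.ne', lintegral_ofReal_cross_mul_comp_planeNorm w hg]
  simp [abs_of_pos hl]

theorem lintegral_halfPlane_crossingSet (w : ℝ × ℝ) {g : ℝ → ℝ≥0∞} (hg : Measurable g) :
    ∫⁻ α in {α | 0 < cross w α}, ∫⁻ β in crossingSet α w, g (planeNorm (α - β))
      = 2 * ENNReal.ofReal (planeNorm w) * ∫⁻ ρ in Ioi 0, ENNReal.ofReal (ρ ^ 2) * g ρ := by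
  rcases eq_or_ne w 0 with rfl | hw
  · simp [cross, planeNorm]
  set P := Icc (0 : ℝ) 1 ×ˢ Ici (1 : ℝ)
  have hP : MeasurableSet P := measurableSet_Icc.prod measurableSet_Ici
  set J : ℝ × ℝ → ℝ × ℝ → ℝ≥0∞ := fun α q =>
    ENNReal.ofReal (q.2 * cross w α) * g (q.2 * planeNorm (q.1 • w - α))
  have hsupport : Function.support (fun α => ∫⁻ q in P, J α q) ⊆ {α | 0 < cross w α} := by
    intro α hα
    by_contra hneg
    refine hα ((setLIntegral_congr_fun hP fun q hq => ?_).trans lintegral_zero)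
    simp only [J]
    rw [ENNReal.ofReal_of_nonpos (mul_nonpos_of_nonneg_of_nonpos
      (zero_le_one.trans hq.2) (not_lt.1 hneg)), zero_mul]
  have hJ : Measurable (Function.uncurry J) := by
    unfold J; fun_prop
  calc ∫⁻ α in {α | 0 < cross w α}, ∫⁻ β in crossingSet α w, g (planeNorm (α - β))
      = ∫⁻ α in {α | 0 < cross w α}, ∫⁻ q in P, J α q :=
        setLIntegral_congr_fun (measurableSet_lt measurable_const (by fun_prop)) fun α hα =>
          lintegral_crossingSet_comp_planeNorm_sub hw hα g
    _ = ∫⁻ q in P, ∫⁻ α, J α q := by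
        rw [setLIntegral_eq_of_support_subset hsupport, lintegral_lintegral_swap hJ.aemeasurable]
    _ = ∫⁻ q in P, ENNReal.ofReal (q.2 ^ 2)⁻¹ *
          (2 * ENNReal.ofReal (planeNorm w) * ∫⁻ ρ in Ioi 0, ENNReal.ofReal (ρ ^ 2) * g ρ) :=
        setLIntegral_congr_fun hP fun q hq =>
          lintegral_ofReal_mul_cross_mul_comp_sub w hg q.1 (zero_lt_one.trans_le hq.2)
    _ = 2 * ENNReal.ofReal (planeNorm w) * ∫⁻ ρ in Ioi 0, ENNReal.ofReal (ρ ^ 2) * g ρ := by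
        rw [lintegral_mul_const _ (by fun_prop), lintegral_Icc_prod_Ici_inv_sq, one_mul]

noncomputable def toEuclidean : (ℝ × ℝ) ≃L[ℝ] EuclideanSpace ℝ (Fin 2) :=
  (ContinuousLinearEquiv.finTwoArrow ℝ ℝ).symm.trans (EuclideanSpace.equiv (Fin 2) ℝ).symm

theorem measurePreserving_toEuclidean : MeasurePreserving toEuclidean :=
  (PiLp.volume_preserving_toLp (Fin 2)).comp (volume_preserving_finTwoArrow ℝ).symm

theorem measurableEmbedding_toEuclidean : MeasurableEmbedding toEuclidean :=
  toEuclidean.toHomeomorph.measurableEmbedding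

@[simp] theorem toEuclidean_apply_zero (p : ℝ × ℝ) : toEuclidean p 0 = p.1 := rfl

@[simp] theorem toEuclidean_apply_one (p : ℝ × ℝ) : toEuclidean p 1 = p.2 := rfl

theorem norm_toEuclidean (p : ℝ × ℝ) : ‖toEuclidean p‖ = planeNorm p := by
  simp [EuclideanSpace.norm_eq, planeNorm]

theorem preimage_Hplus_toEuclidean (w : ℝ × ℝ) :
    toEuclidean ⁻¹' Hplus 0 (toEuclidean w) = {α | 0 < cross w α} := by
  ext α
  simp [Hplus, cross]

theorem lintegral_comp_norm_euclideanSpace {f : ℝ → ℝ≥0∞} (hf : Measurable f) :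
    ∫⁻ y : EuclideanSpace ℝ (Fin 2), f ‖y‖
      = ENNReal.ofReal (2 * π) * ∫⁻ ρ in Ioi 0, ENNReal.ofReal ρ * f ρ := by
  rw [← measurePreserving_toEuclidean.lintegral_comp_emb measurableEmbedding_toEuclidean]
  simp only [norm_toEuclidean]
  exact lintegral_comp_planeNorm hf

theorem lintegral_Hplus_crossing (y : EuclideanSpace ℝ (Fin 2)) {g : ℝ → ℝ≥0∞}
    (hg : Measurable g) :
    ∫⁻ a in Hplus 0 y, ∫⁻ b in {b | (segment ℝ a b ∩ segment ℝ 0 y).Nonempty}, g (dist a b)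
      = 2 * ENNReal.ofReal ‖y‖ * ∫⁻ ρ in Ioi 0, ENNReal.ofReal (ρ ^ 2) * g ρ := by
  obtain ⟨w, rfl⟩ := toEuclidean.surjective y
  have hmp := measurePreserving_toEuclidean
  have hemb := measurableEmbedding_toEuclidean
  have hinner (α : ℝ × ℝ) :
      ∫⁻ b in crossingSet (toEuclidean α) (toEuclidean w), g (dist (toEuclidean α) b)
        = ∫⁻ β in crossingSet α w, g (planeNorm (α - β)) := by
    rw [← hmp.setLIntegral_comp_preimage_emb hemb,
      preimage_crossingSet toEuclidean.injective]
    simp only [dist_eq_norm, ← map_sub, norm_toEuclidean]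
  rw [← hmp.setLIntegral_comp_preimage_emb hemb, preimage_Hplus_toEuclidean, norm_toEuclidean]
  simp only [crossingSet] at hinner
  simp_rw [hinner]
  exact lintegral_halfPlane_crossingSet w hg

end PlaneCrossing

open PlaneCrossing in
/-- For every measurable `g : [0,∞) → [0,∞]`,
`∫_{y ∈ ℝ²} g(|y|) ( ∫_{a ∈ H⁺(0,y)} ∫_{b : [a,b] ∩ [0,y] ≠ ∅} g(|a−b|) db da ) dy
  = 4π ( ∫_0^∞ r² g(r) dr )²`. -/
theorem stmt1 (g : ℝ → ℝ≥0∞) (hg : Measurable g) :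
    ∫⁻ y : EuclideanSpace ℝ (Fin 2),
      g ‖y‖ *
        ∫⁻ a in Hplus 0 y,
          ∫⁻ b in {b : EuclideanSpace ℝ (Fin 2) |
              (segment ℝ a b ∩ segment ℝ 0 y).Nonempty},
            g (dist a b) =
      ENNReal.ofReal (4 * π) *
        (∫⁻ r in Set.Ioi (0 : ℝ), ENNReal.ofReal (r ^ 2) * g r) ^ 2 := by
  simp_rw [lintegral_Hplus_crossing _ hg]
  generalize hM : ∫⁻ r in Set.Ioi (0 : ℝ), ENNReal.ofReal (r ^ 2) * g r = M
  have hradial : ∀ ρ ∈ Ioi (0 : ℝ),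
      ENNReal.ofReal ρ * (g ρ * (2 * ENNReal.ofReal ρ * M))
        = 2 * M * (ENNReal.ofReal (ρ ^ 2) * g ρ) := by
    intro ρ (hρ : 0 < ρ)
    rw [pow_two, ENNReal.ofReal_mul hρ.le]
    ring
  have hfour : ENNReal.ofReal (4 * π) = ENNReal.ofReal (2 * π) * 2 := by
    rw [← ENNReal.ofReal_ofNat 2, ← ENNReal.ofReal_mul (by positivity)]
    ring_nf
  rw [lintegral_comp_norm_euclideanSpace (f := fun r => g r * (2 * ENNReal.ofReal r * M))
      (by fun_prop), setLIntegral_congr_fun measurableSet_Ioi hradial,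
    lintegral_const_mul _ (by fun_prop), hM, hfour]
  ring
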